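/- Let K ⊂ GL(d,ℝ) be compact with L_K = sup_{g∈K} max(‖g‖,‖g⁻¹‖)², and let μ, μ' be probability measures supported in K. Then for every p ∈ ℕ*, the Wasserstein distance between convolution powers satisfies d_W((μ')^{*p}, μ^{*p}) ≤ p · L_K^{(p−1)/2} · d_W(μ', μ). -/

import Mathlib

/-!
Since `μ^{*(n+1)} = μ ∗ μ^{*n}`, a bounded `K`-Lipschitz test function `f` integrates against
`μ^{*(n+1)}` as `∫ ψ_P dμ`, where `P = μ^{*n}` and `ψ_P h = ∫ f (h * A) dP(A)`. As `P` lives on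
`‖A‖ ≤ s^n` (with `s = √L ≥ ‖g‖` on `K`), `ψ_P` is `K s^n`-Lipschitz, so replacing `μ` by `μ'`
costs `K s^n d_W(μ', μ)`; and for `‖h‖ ≤ s` the function `A ↦ f (h * A)` is `K s`-Lipschitz, so by
induction replacing `P` by `P' = μ'^{*n}` costs `K s · n s^(n-1) d_W(μ', μ)`. Summing the two
gives `K (n+1) s^n d_W(μ', μ)`.
-/

open MeasureTheory

instance matrixMeasurableSpace {d : ℕ} : MeasurableSpace (Matrix (Fin d) (Fin d) ℝ) :=
  MeasurableSpace.pi

/-- The operator norm of a `d × d` real matrix acting on Euclidean space. -/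
noncomputable def opN {d : ℕ} (A : Matrix (Fin d) (Fin d) ℝ) : ℝ :=
  ‖(Matrix.toEuclideanCLM (𝕜 := ℝ) A :
      EuclideanSpace ℝ (Fin d) →L[ℝ] EuclideanSpace ℝ (Fin d))‖

/-- The Kantorovich–Rubinstein (Wasserstein) distance for the operator norm metric. -/
noncomputable def dW {d : ℕ} (μ ν : Measure (Matrix (Fin d) (Fin d) ℝ)) : ℝ :=
  sSup {r : ℝ | ∃ f : Matrix (Fin d) (Fin d) ℝ → ℝ,
    (∀ A B, |f A - f B| ≤ opN (A - B)) ∧ (∃ C, ∀ A, |f A| ≤ C) ∧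
    r = |(∫ g, f g ∂ν) - ∫ g, f g ∂μ|}

/-- The `p`-fold convolution power of `μ`: the pushforward of `μ^{⊗p}` under
`(g₁, …, g_p) ↦ g_p ⋯ g₁`. -/
noncomputable def convPow {d : ℕ} (μ : Measure (Matrix (Fin d) (Fin d) ℝ)) (p : ℕ) :
    Measure (Matrix (Fin d) (Fin d) ℝ) :=
  Measure.map (fun t : Fin p → Matrix (Fin d) (Fin d) ℝ => (List.ofFn t).reverse.prod)
    (Measure.pi fun _ => μ)

open scoped NNReal Matrix.Norms.L2Operator

theorem natCast_mul_sqrt_pow_sub_one {x : ℝ} (hx : 0 ≤ x) (p : ℕ) :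
    (p : ℝ) * √x ^ (p - 1) = p * x ^ (((p : ℝ) - 1) / 2) := by
  rcases Nat.eq_zero_or_pos p with rfl | hp
  · simp
  rw [Real.sqrt_eq_rpow, ← Real.rpow_natCast, ← Real.rpow_mul hx, Nat.cast_sub hp, Nat.cast_one]
  ring_nf

theorem abs_integral_le_of_ae_abs_le {Y : Type*} [MeasurableSpace Y] {μ : Measure Y}
    [IsProbabilityMeasure μ] {g : Y → ℝ} {C : ℝ} (hgC : ∀ᵐ y ∂μ, |g y| ≤ C) :
    |∫ y, g y ∂μ| ≤ C := by
  simpa using norm_integral_le_of_norm_le_const (f := g) hgC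

section Lipschitz

variable {X : Type*} [PseudoMetricSpace X] {K : ℝ≥0} {f : X → ℝ}

theorem LipschitzWith.integrable_of_abs_le [MeasurableSpace X] [OpensMeasurableSpace X]
    [SecondCountableTopology X] (hf : LipschitzWith K f) {C : ℝ} (hfC : ∀ x, |f x| ≤ C)
    (μ : Measure X) [IsFiniteMeasure μ] : Integrable f μ :=
  .of_bound hf.continuous.aestronglyMeasurable C (ae_of_all _ hfC)

theorem lipschitzWith_integral {Y : Type*} [MeasurableSpace Y] {ν : Measure Y}
    [IsProbabilityMeasure ν] {F : X → Y → ℝ} (hFi : ∀ x, Integrable (F x) ν)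
    (hF : ∀ᵐ y ∂ν, LipschitzWith K fun x => F x y) :
    LipschitzWith K fun x => ∫ y, F x y ∂ν := by
  refine .of_dist_le_mul fun x x' => ?_
  rw [Real.dist_eq, ← integral_sub (hFi x) (hFi x')]
  exact abs_integral_le_of_ae_abs_le <| hF.mono fun y hy => hy.dist_le_mul x x'

end Lipschitz

theorem abs_integral_sub_apply_zero_le {E : Type*} [NormedAddCommGroup E] [MeasurableSpace E]
    {μ : Measure E} [IsProbabilityMeasure μ] {r : ℝ} (hμ : ∀ᵐ x ∂μ, ‖x‖ ≤ r) {K : ℝ≥0}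
    {f : E → ℝ} (hf : LipschitzWith K f) (hfi : Integrable f μ) :
    |∫ x, f x ∂μ - f 0| ≤ K * r := by
  have hsub : ∫ x, f x ∂μ - f 0 = ∫ x, (f x - f 0) ∂μ := by
    rw [integral_sub hfi (integrable_const _), integral_const, probReal_univ, one_smul]
  rw [hsub]
  refine abs_integral_le_of_ae_abs_le (hμ.mono fun x hx => ?_)
  calc |f x - f 0| ≤ K * ‖x - 0‖ := by rw [← dist_eq_norm]; exact hf.dist_le_mul x 0
    _ ≤ K * r := by rw [sub_zero]; gcongr

section NormedRing

variable {R : Type*} [NormedRing R] {K : ℝ≥0} {f : R → ℝ}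

theorem LipschitzWith.comp_mul_left (hf : LipschitzWith K f) (a : R) :
    LipschitzWith (K * ‖a‖₊) fun x => f (a * x) := by
  refine .of_dist_le_mul fun x y => ?_
  calc dist (f (a * x)) (f (a * y)) ≤ K * ‖a * (x - y)‖ := by
        rw [mul_sub, ← dist_eq_norm]; exact hf.dist_le_mul _ _
    _ ≤ K * (‖a‖ * ‖x - y‖) := by gcongr; exact norm_mul_le _ _
    _ = ↑(K * ‖a‖₊) * dist x y := by push_cast; rw [dist_eq_norm]; ring

theorem LipschitzWith.comp_mul_right (hf : LipschitzWith K f) (a : R) :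
    LipschitzWith (K * ‖a‖₊) fun x => f (x * a) := by
  refine .of_dist_le_mul fun x y => ?_
  calc dist (f (x * a)) (f (y * a)) ≤ K * ‖(x - y) * a‖ := by
        rw [sub_mul, ← dist_eq_norm]; exact hf.dist_le_mul _ _
    _ ≤ K * (‖x - y‖ * ‖a‖) := by gcongr; exact norm_mul_le _ _
    _ = ↑(K * ‖a‖₊) * dist x y := by push_cast; rw [dist_eq_norm]; ring

variable [MeasurableSpace R] [OpensMeasurableSpace R]

theorem ae_norm_mconv_le [MeasurableMul₂ R] {μ ν : Measure R} [SFinite ν] {a b : ℝ≥0}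
    (hμ : ∀ᵐ x ∂μ, ‖x‖ ≤ a) (hν : ∀ᵐ x ∂ν, ‖x‖ ≤ b) :
    ∀ᵐ x ∂μ ∗ₘ ν, ‖x‖ ≤ a * b := by
  rw [Measure.mconv, ae_map_iff measurable_mul.aemeasurable
    (isClosed_le continuous_norm continuous_const).measurableSet]
  filter_upwards [Measure.quasiMeasurePreserving_fst.ae hμ,
    Measure.quasiMeasurePreserving_snd.ae hν] with z h₁ h₂
  calc ‖z.1 * z.2‖ ≤ ‖z.1‖ * ‖z.2‖ := norm_mul_le _ _
    _ ≤ a * b := by gcongr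

theorem LipschitzWith.integral_comp_mul_right [SecondCountableTopology R]
    (hf : LipschitzWith K f) {C : ℝ} (hfC : ∀ x, |f x| ≤ C) {ν : Measure R}
    [IsProbabilityMeasure ν] {r : ℝ≥0} (hν : ∀ᵐ a ∂ν, ‖a‖ ≤ r) :
    LipschitzWith (K * r) fun x => ∫ a, f (x * a) ∂ν :=
  lipschitzWith_integral
    (fun x => (hf.comp_mul_left x).integrable_of_abs_le (fun a => hfC _) ν)
    (hν.mono fun a ha => (hf.comp_mul_right a).weaken (by gcongr; exact_mod_cast ha))

end NormedRing

theorem continuous_prod_reverse_ofFn {M : Type*} [Monoid M] [TopologicalSpace M]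
    [ContinuousMul M] (p : ℕ) : Continuous fun t : Fin p → M => (List.ofFn t).reverse.prod := by
  have h : (fun t : Fin p → M => (List.ofFn t).reverse.prod) =
      fun t => ((List.finRange p).reverse.map fun i => t i).prod := by
    ext t; simp [List.ofFn_eq_map, List.map_reverse]
  rw [h]
  exact continuous_list_prod _ fun i _ => continuous_apply i

theorem Matrix.l2_opNorm_one_le {n 𝕜 : Type*} [Fintype n] [DecidableEq n] [RCLike 𝕜] :
    ‖(1 : Matrix n n 𝕜)‖ ≤ 1 := by
  rw [Matrix.cstar_norm_def, map_one]
  exact ContinuousLinearMap.norm_id_le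

section Matrix

variable {d : ℕ}

local notation "Mat" => Matrix (Fin d) (Fin d) ℝ

instance : BorelSpace Mat := inferInstanceAs (BorelSpace (Fin d → Fin d → ℝ))

theorem lipschitzWith_one_iff_abs_sub_le_opN {f : Mat → ℝ} :
    LipschitzWith 1 f ↔ ∀ A B, |f A - f B| ≤ opN (A - B) := by
  simp [lipschitzWith_iff_dist_le_mul, dist_eq_norm, opN, Matrix.cstar_norm_def]

theorem abs_integral_sub_le_dW {μ ν : Measure Mat} [IsProbabilityMeasure μ]
    [IsProbabilityMeasure ν] {R : ℝ} (hμ : ∀ᵐ A ∂μ, ‖A‖ ≤ R) (hν : ∀ᵐ A ∂ν, ‖A‖ ≤ R)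
    {f : Mat → ℝ} (hf : LipschitzWith 1 f) {C : ℝ} (hfC : ∀ A, |f A| ≤ C) :
    |∫ A, f A ∂ν - ∫ A, f A ∂μ| ≤ dW μ ν := by
  refine le_csSup ⟨2 * R, ?_⟩ ⟨f, lipschitzWith_one_iff_abs_sub_le_opN.1 hf, ⟨C, hfC⟩, rfl⟩
  rintro _ ⟨g, hg, ⟨C', hgC⟩, rfl⟩
  rw [← lipschitzWith_one_iff_abs_sub_le_opN] at hg
  have hν' := abs_integral_sub_apply_zero_le hν hg (hg.integrable_of_abs_le hgC ν)
  have hμ' := abs_integral_sub_apply_zero_le hμ hg (hg.integrable_of_abs_le hgC μ)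
  push_cast at hν' hμ'
  linarith [abs_sub_le (∫ A, g A ∂ν) (g 0) (∫ A, g A ∂μ), abs_sub_comm (g 0) (∫ A, g A ∂μ)]

theorem abs_integral_sub_le_mul_dW {μ ν : Measure Mat} [IsProbabilityMeasure μ]
    [IsProbabilityMeasure ν] {R : ℝ} (hμ : ∀ᵐ A ∂μ, ‖A‖ ≤ R) (hν : ∀ᵐ A ∂ν, ‖A‖ ≤ R)
    {K : ℝ≥0} {f : Mat → ℝ} (hf : LipschitzWith K f) {C : ℝ} (hfC : ∀ A, |f A| ≤ C) :
    |∫ A, f A ∂ν - ∫ A, f A ∂μ| ≤ K * dW μ ν := by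
  rcases eq_or_ne K 0 with rfl | hK
  · have hconst : f = fun _ => f 0 :=
      funext fun A => dist_le_zero.1 (by simpa using hf.dist_le_mul A 0)
    rw [hconst]; simp
  have hK' : (0 : ℝ) < K := by positivity
  have hscaled : LipschitzWith 1 fun A => (K : ℝ)⁻¹ * f A := by
    refine .of_dist_le_mul fun A B => ?_
    rw [Real.dist_eq, ← mul_sub, abs_mul, abs_of_pos (inv_pos.2 hK'), NNReal.coe_one, one_mul,
      inv_mul_le_iff₀ hK']
    exact hf.dist_le_mul A B
  have := abs_integral_sub_le_dW hμ hν hscaled (C := (K : ℝ)⁻¹ * C) fun A => by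
    rw [abs_mul, abs_of_pos (inv_pos.2 hK')]; gcongr; exact hfC A
  rwa [integral_const_mul, integral_const_mul, ← mul_sub, abs_mul, abs_of_pos (inv_pos.2 hK'),
    inv_mul_le_iff₀ hK'] at this

theorem dW_le_of_forall_lipschitzWith {μ ν : Measure Mat} {c : ℝ} (hc : 0 ≤ c)
    (h : ∀ f : Mat → ℝ, LipschitzWith 1 f → ∀ C, (∀ A, |f A| ≤ C) →
      |∫ A, f A ∂ν - ∫ A, f A ∂μ| ≤ c) :
    dW μ ν ≤ c := by
  refine Real.sSup_le ?_ hc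
  rintro _ ⟨f, hf, ⟨C, hfC⟩, rfl⟩
  exact h f (lipschitzWith_one_iff_abs_sub_le_opN.2 hf) C hfC

theorem dW_nonneg (μ ν : Measure Mat) : 0 ≤ dW μ ν :=
  Real.sSup_nonneg fun _ ⟨_, _, _, hr⟩ => hr ▸ abs_nonneg _

theorem measurable_prod_reverse_ofFn (p : ℕ) :
    Measurable fun t : Fin p → Mat => (List.ofFn t).reverse.prod :=
  (continuous_prod_reverse_ofFn p).measurable

instance (μ : Measure Mat) [IsProbabilityMeasure μ] (p : ℕ) :
    IsProbabilityMeasure (convPow μ p) :=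
  Measure.isProbabilityMeasure_map (measurable_prod_reverse_ofFn p).aemeasurable

theorem convPow_zero (μ : Measure Mat) : convPow μ 0 = Measure.dirac 1 := by
  simp [convPow]

theorem convPow_succ (μ : Measure Mat) [SigmaFinite μ] (p : ℕ) :
    convPow μ (p + 1) = μ ∗ₘ convPow μ p := by
  set e := MeasurableEquiv.piFinSuccAbove (fun _ : Fin (p + 1) => Mat) (Fin.last p)
  have hpi : Measure.pi (fun _ => μ) = (μ.prod (Measure.pi fun _ : Fin p => μ)).map e.symm := by
    rw [← (measurePreserving_piFinSuccAbove (fun _ => μ) (Fin.last p)).map_eq,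
      MeasurableEquiv.map_symm_map]
  have hprod : (fun t : Fin (p + 1) → Mat => (List.ofFn t).reverse.prod) ∘ e.symm =
      (fun x : Mat × Mat => x.1 * x.2) ∘
        Prod.map id fun t : Fin p → Mat => (List.ofFn t).reverse.prod := by
    ext1 ⟨h, t⟩
    simp only [Function.comp_apply, e, MeasurableEquiv.piFinSuccAbove_symm_apply,
      Fin.insertNthEquiv_apply, Fin.insertNth_last', List.ofFn_succ', Prod.map_apply, id_eq]
    simp
  rw [convPow, hpi, Measure.map_map (measurable_prod_reverse_ofFn _) e.symm.measurable, hprod,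
    ← Measure.map_map measurable_mul (measurable_id.prodMap (measurable_prod_reverse_ofFn p)),
    ← Measure.map_prod_map _ _ measurable_id (measurable_prod_reverse_ofFn p), Measure.map_id]
  rfl

theorem ae_norm_convPow_le {μ : Measure Mat} [IsProbabilityMeasure μ] {s : ℝ≥0}
    (hμ : ∀ᵐ A ∂μ, ‖A‖ ≤ s) (p : ℕ) : ∀ᵐ A ∂convPow μ p, ‖A‖ ≤ ↑(s ^ p) := by
  induction p with
  | zero => simpa [convPow_zero] using Matrix.l2_opNorm_one_le
  | succ n ih => rw [convPow_succ, pow_succ']; exact ae_norm_mconv_le hμ ih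

theorem abs_integral_convPow_sub_le {μ μ' : Measure Mat} [IsProbabilityMeasure μ]
    [IsProbabilityMeasure μ'] {s : ℝ≥0} (hμ : ∀ᵐ A ∂μ, ‖A‖ ≤ s) (hμ' : ∀ᵐ A ∂μ', ‖A‖ ≤ s)
    (p : ℕ) {K : ℝ≥0} {f : Mat → ℝ} (hf : LipschitzWith K f) {C : ℝ} (hfC : ∀ A, |f A| ≤ C) :
    |∫ A, f A ∂convPow μ p - ∫ A, f A ∂convPow μ' p| ≤ K * p * s ^ (p - 1) * dW μ' μ := by
  induction p generalizing K f with
  | zero => simp [convPow_zero]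
  | succ n ih =>
    set P := convPow μ n
    set P' := convPow μ' n
    have hψ : LipschitzWith (K * s ^ n) fun h => ∫ A, f (h * A) ∂P :=
      hf.integral_comp_mul_right hfC (ae_norm_convPow_le hμ n)
    have hψ' : LipschitzWith (K * s ^ n) fun h => ∫ A, f (h * A) ∂P' :=
      hf.integral_comp_mul_right hfC (ae_norm_convPow_le hμ' n)
    have hψC (ν : Measure Mat) [IsProbabilityMeasure ν] (h : Mat) : |∫ A, f (h * A) ∂ν| ≤ C :=
      abs_integral_le_of_ae_abs_le (ae_of_all _ fun A => hfC _)
    have hfirst : |∫ h, ∫ A, f (h * A) ∂P ∂μ - ∫ h, ∫ A, f (h * A) ∂P ∂μ'|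
        ≤ K * s ^ n * dW μ' μ := by
      simpa using abs_integral_sub_le_mul_dW hμ' hμ hψ (hψC P)
    have hrest : |∫ h, ∫ A, f (h * A) ∂P ∂μ' - ∫ h, ∫ A, f (h * A) ∂P' ∂μ'|
        ≤ K * s * n * s ^ (n - 1) * dW μ' μ := by
      rw [← integral_sub (hψ.integrable_of_abs_le (hψC P) μ')
        (hψ'.integrable_of_abs_le (hψC P') μ')]
      refine abs_integral_le_of_ae_abs_le (hμ'.mono fun h hh => ?_)
      have hfh : LipschitzWith (K * s) fun A => f (h * A) :=
        (hf.comp_mul_left h).weaken (by gcongr; exact_mod_cast hh)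
      simpa using ih hfh fun A => hfC _
    have hpow : (K : ℝ) * s * n * s ^ (n - 1) = K * n * s ^ n := by
      rcases n with _ | n
      · simp
      · rw [Nat.add_sub_cancel, pow_succ]; ring
    rw [convPow_succ, convPow_succ, integral_mconv (hf.integrable_of_abs_le hfC _),
      integral_mconv (hf.integrable_of_abs_le hfC _)]
    calc _ ≤ _ := abs_sub_le _ (∫ h, ∫ A, f (h * A) ∂P ∂μ') _
      _ ≤ K * s ^ n * dW μ' μ + K * s * n * s ^ (n - 1) * dW μ' μ := add_le_add hfirst hrest
      _ = K * ↑(n + 1) * s ^ (n + 1 - 1) * dW μ' μ := by rw [hpow]; push_cast; ring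

end Matrix

theorem dW_convPow_le_general {d : ℕ}
    (K : Set (Matrix (Fin d) (Fin d) ℝ))
    (μ μ' : Measure (Matrix (Fin d) (Fin d) ℝ))
    [IsProbabilityMeasure μ] [IsProbabilityMeasure μ']
    (hsupp : μ Kᶜ = 0) (hsupp' : μ' Kᶜ = 0)
    (L : ℝ) (hL : ∀ g ∈ K, max (opN g) (opN g⁻¹) ^ 2 ≤ L)
    (p : ℕ) :
    dW (convPow μ' p) (convPow μ p) ≤
      (p : ℝ) * L ^ (((p : ℝ) - 1) / 2) * dW μ' μ := by
  have hKne : K.Nonempty := Set.nonempty_iff_ne_empty.2 fun h => by simp [h] at hsupp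
  have hL0 : 0 ≤ L := hKne.elim fun g hg => (sq_nonneg _).trans (hL g hg)
  let s : ℝ≥0 := ⟨√L, Real.sqrt_nonneg L⟩
  have hKs : ∀ g ∈ K, ‖g‖ ≤ s := fun g hg => (Real.le_sqrt (norm_nonneg g) hL0).2 <|
    (pow_le_pow_left₀ (norm_nonneg g) (le_max_left _ _) 2).trans (hL g hg)
  have hae (ν : Measure (Matrix (Fin d) (Fin d) ℝ)) (hν : ν Kᶜ = 0) : ∀ᵐ A ∂ν, ‖A‖ ≤ s :=
    Filter.Eventually.mono (mem_ae_iff.2 hν : ∀ᵐ A ∂ν, A ∈ K) hKs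
  have hdW := dW_nonneg μ' μ
  refine dW_le_of_forall_lipschitzWith (by positivity) fun f hf C hfC => ?_
  calc _ ≤ (1 : ℝ≥0) * p * s ^ (p - 1) * dW μ' μ :=
        abs_integral_convPow_sub_le (hae μ hsupp) (hae μ' hsupp') p hf hfC
    _ = _ := by rw [NNReal.coe_one, one_mul]; congr 1; exact natCast_mul_sqrt_pow_sub_one hL0 p

/-- For probability measures supported in a compact set `K` of invertible matrices with
`max(‖g‖,‖g⁻¹‖)² ≤ L` on `K`,
`d_W((μ')^{*p}, μ^{*p}) ≤ p · L^{(p−1)/2} · d_W(μ', μ)`. -/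
theorem dW_convPow_le {d : ℕ}
    (K : Set (Matrix (Fin d) (Fin d) ℝ)) (hK : IsCompact K)
    (hKinv : ∀ g ∈ K, IsUnit g)
    (μ μ' : Measure (Matrix (Fin d) (Fin d) ℝ))
    [IsProbabilityMeasure μ] [IsProbabilityMeasure μ']
    (hsupp : μ Kᶜ = 0) (hsupp' : μ' Kᶜ = 0)
    (L : ℝ) (hL1 : 1 ≤ L) (hL : ∀ g ∈ K, max (opN g) (opN g⁻¹) ^ 2 ≤ L)
    (p : ℕ) (hp : 1 ≤ p) :
    dW (convPow μ' p) (convPow μ p) ≤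
      (p : ℝ) * L ^ (((p : ℝ) - 1) / 2) * dW μ' μ :=
  dW_convPow_le_general K μ μ' hsupp hsupp' L hL p
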